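/- For every natural number n, the matrices of the bi-periodic Jacobsthal matrix sequence satisfy J_{2n+2} = (ab+4)·J_{2n} − 4·J_{2n-2} and J_{2n+3} = (ab+4)·J_{2n+1} − 4·J_{2n-1} for n ≥ 1. -/

import Mathlib

noncomputable def JM (a b : ℝ) : ℕ → Matrix (Fin 2) (Fin 2) ℝ
  | 0 => 1
  | 1 => !![b, 2 * b / a; 1, 0]
  | n + 2 => (if Even (n + 2) then a else b) • JM a b (n + 1) + (2 : ℝ) • JM a b n

/-!
The coefficients of the recurrence have period two, so two consecutive steps can be composed:
`u (n + 4)` is a combination of `u (n + 3)` and `u (n + 2)`, and the middle term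
`c n • u (n + 1)` is eliminated using `u (n + 2) = c n • u (n + 1) + 2 • u n`.
Only the product of the two coefficients survives, which is `a * b` at either parity.
-/

theorem add_four_eq_of_periodic_two {R M : Type*} [CommRing R] [AddCommGroup M] [Module R M]
    {c : ℕ → R} {u : ℕ → M} (hc : ∀ n, c (n + 2) = c n)
    (hu : ∀ n, u (n + 2) = c n • u (n + 1) + (2 : R) • u n) (n : ℕ) :
    u (n + 4) = (c n * c (n + 1) + 4) • u (n + 2) - (4 : R) • u n := by
  have h4 := hu (n + 2)
  rw [hc] at h4
  linear_combination (norm := module) h4 + c n • hu (n + 1) - (2 : R) • hu n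

theorem JM_add_two (a b : ℝ) (n : ℕ) :
    JM a b (n + 2) = (if Even n then a else b) • JM a b (n + 1) + (2 : ℝ) • JM a b n := by
  simp only [JM, Nat.even_add, even_two, iff_true]

theorem JM_add_four (a b : ℝ) (n : ℕ) :
    JM a b (n + 4) = (a * b + 4) • JM a b (n + 2) - (4 : ℝ) • JM a b n := by
  have hc : ∀ n, (if Even (n + 2) then a else b) = if Even n then a else b := by
    simp [Nat.even_add]
  rw [add_four_eq_of_periodic_two hc (JM_add_two a b) n]
  congr 2
  by_cases hn : Even n <;> simp [hn, Nat.even_add_one, mul_comm]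

theorem stmt2_general (a b : ℝ) (n : ℕ) (hn : 1 ≤ n) :
    JM a b (2 * n + 2) = (a * b + 4) • JM a b (2 * n) - (4 : ℝ) • JM a b (2 * n - 2) ∧
    JM a b (2 * n + 3) = (a * b + 4) • JM a b (2 * n + 1) - (4 : ℝ) • JM a b (2 * n - 1) := by
  obtain ⟨m, rfl⟩ := Nat.exists_eq_add_of_le' hn
  -- `2 * (m + 1) + 2` and `2 * (m + 1) - 2` reduce definitionally to `2 * m + 4` and `2 * m`.
  exact ⟨JM_add_four a b (2 * m), JM_add_four a b (2 * m + 1)⟩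

theorem stmt2 (a b : ℝ) (ha : a ≠ 0) (hb : b ≠ 0) (n : ℕ) (hn : 1 ≤ n) :
    JM a b (2 * n + 2) = (a * b + 4) • JM a b (2 * n) - (4 : ℝ) • JM a b (2 * n - 2) ∧
    JM a b (2 * n + 3) = (a * b + 4) • JM a b (2 * n + 1) - (4 : ℝ) • JM a b (2 * n - 1) :=
  stmt2_general a b n hn
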